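/- arXiv:math/9412216 — 2 statements merged into one kernel-verified Lean document; each statement's English description precedes it below -/
import Mathlib

section
/- Let T be a linear isometry of the complex Banach space c₀ into itself, and let k be an index such that |(T e_k)(j)| < 1/2 for every index j ≠ k. Then |(T e_k)(k)| = 1. -/
open ZeroAtInfty Filter Topology

/-- `c₀` is modelled as `C₀(ℕ, ℂ)`, the space of sequences of complex numbers tending to `0`
with the supremum norm.  `stdBasis k` is the standard unit vector which is `1` in coordinate `k`
and `0` elsewhere (indices are `0`-based, so `stdBasis (k-1)` is the paper's `e_k`). -/
noncomputable def stdBasis (k : ℕ) : C₀(ℕ, ℂ) :=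
  { toFun := fun j => if j = k then 1 else 0
    continuous_toFun := continuous_of_discreteTopology
    zero_at_infty' := by
      rw [cocompact_eq_atTop]
      refine tendsto_nhds_of_eventually_eq ?_
      filter_upwards [eventually_gt_atTop k] with j hj
      simp [Nat.ne_of_gt hj] }

/-! An isometry preserves `‖e_k‖ = 1`, and the sup norm of a sequence is at most the maximum of
its `k`-th coordinate and the bound `1/2` on the others; so the `k`-th coordinate must carry the
norm. -/

namespace ZeroAtInftyContinuousMap

variable {α β : Type*} [TopologicalSpace α] [SeminormedAddCommGroup β]

theorem norm_apply_le (f : C₀(α, β)) (x : α) : ‖f x‖ ≤ ‖f‖ :=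
  f.toBCF.norm_coe_le_norm x

theorem norm_le_max_of_forall_ne_le (f : C₀(α, β)) (x : α) {c : ℝ}
    (h : ∀ y, y ≠ x → ‖f y‖ ≤ c) : ‖f‖ ≤ max ‖f x‖ c := by
  rw [← norm_toBCF_eq_norm]
  refine (BoundedContinuousFunction.norm_le (le_max_of_le_left (norm_nonneg _))).2 fun y => ?_
  rcases eq_or_ne y x with rfl | hy
  · exact le_max_left _ _
  · exact le_max_of_le_right (h y hy)

theorem norm_apply_eq_norm_of_forall_ne_le (f : C₀(α, β)) (x : α) {c : ℝ} (hc : c < ‖f‖)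
    (h : ∀ y, y ≠ x → ‖f y‖ ≤ c) : ‖f x‖ = ‖f‖ := by
  refine (f.norm_apply_le x).antisymm (le_of_not_gt fun hlt => ?_)
  exact (f.norm_le_max_of_forall_ne_le x h).not_gt (max_lt hlt hc)

end ZeroAtInftyContinuousMap

theorem norm_stdBasis (k : ℕ) : ‖stdBasis k‖ = 1 := by
  have hk : ‖stdBasis k k‖ = 1 := by simp [stdBasis]
  refine le_antisymm ?_ (hk ▸ (stdBasis k).norm_apply_le k)
  calc ‖stdBasis k‖ ≤ max ‖stdBasis k k‖ 0 :=
        (stdBasis k).norm_le_max_of_forall_ne_le k fun j hj => by simp [stdBasis, hj]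
    _ = 1 := by simp [hk]

/-- If `T` is a linear isometry of `c₀` and `|(T e_k)(j)| < 1/2` for all `j ≠ k`,
then `|(T e_k)(k)| = 1`. -/
theorem c0_isometry_diagonal_coordinate_of_small_off_diagonal
    (T : C₀(ℕ, ℂ) →ₗ[ℂ] C₀(ℕ, ℂ)) (hiso : ∀ x : C₀(ℕ, ℂ), ‖T x‖ = ‖x‖) (k : ℕ)
    (hsmall : ∀ j : ℕ, j ≠ k → ‖(T (stdBasis k)) j‖ < 1 / 2) :
    ‖(T (stdBasis k)) k‖ = 1 := by
  have hnorm : ‖T (stdBasis k)‖ = 1 := by rw [hiso, norm_stdBasis]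
  rw [← hnorm]
  exact (T (stdBasis k)).norm_apply_eq_norm_of_forall_ne_le k (by norm_num [hnorm])
    fun j hj => (hsmall j hj).le
end

section
/- Let T be a linear isometry of the complex Banach space ℓ¹ into itself. If x, y ∈ ℓ¹ have disjoint supports (x(j)·y(j) = 0 for every index j), then T x and T y have disjoint supports. -/
open Complex

lemma l1_hasSum_norm (f : lp (fun _ : ℕ => ℂ) 1) :
    HasSum (fun i => ‖f i‖) ‖f‖ := by
  have := lp.hasSum_norm (p := 1) (by norm_num) f
  simpa using this

lemma l1_norm_eq_tsum (f : lp (fun _ : ℕ => ℂ) 1) :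
    ‖f‖ = ∑' i, ‖f i‖ := (l1_hasSum_norm f).tsum_eq.symm

/-- A linear isometry of `ℓ¹` maps disjointly supported elements to disjointly supported
elements. -/
theorem l1_isometry_preserves_disjoint_supports
    (T : lp (fun _ : ℕ => ℂ) 1 →ₗ[ℂ] lp (fun _ : ℕ => ℂ) 1)
    (hiso : ∀ x : lp (fun _ : ℕ => ℂ) 1, ‖T x‖ = ‖x‖)
    (x y : lp (fun _ : ℕ => ℂ) 1)
    (hxy : ∀ j : ℕ, (x : ∀ _ : ℕ, ℂ) j * (y : ∀ _ : ℕ, ℂ) j = 0) :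
    ∀ j : ℕ, (T x : ∀ _ : ℕ, ℂ) j * (T y : ∀ _ : ℕ, ℂ) j = 0 := by
  intro j
  by_contra hj
  set a : ℂ := (T x : ∀ _ : ℕ, ℂ) j with ha
  set b : ℂ := (T y : ∀ _ : ℕ, ℂ) j with hb
  have ha0 : a ≠ 0 := fun h => hj (by rw [h, zero_mul])
  have hb0 : b ≠ 0 := fun h => hj (by rw [h, mul_zero])
  have hra : (0:ℝ) < ‖a‖ := norm_pos_iff.mpr ha0
  have hrb : (0:ℝ) < ‖b‖ := norm_pos_iff.mpr hb0
  set c : ℂ := -(a * (starRingEnd ℂ) b) / ((‖a‖ : ℂ) * (‖b‖ : ℂ)) with hc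
  have hca : ((‖a‖ : ℂ)) ≠ 0 := by exact_mod_cast hra.ne'
  have hcbne : ((‖b‖ : ℂ)) ≠ 0 := by exact_mod_cast hrb.ne'
  have hcnorm : ‖c‖ = 1 := by
    rw [hc, norm_div, norm_neg, norm_mul, norm_mul, Complex.norm_real, Complex.norm_real,
      RCLike.norm_conj, Real.norm_of_nonneg hra.le, Real.norm_of_nonneg hrb.le,
      div_self (by positivity)]
  -- norm of x + c • y equals ‖x‖ + ‖y‖ by disjointness
  have hxc : ‖x + c • y‖ = ‖x‖ + ‖y‖ := by
    have hsum : HasSum (fun i => ‖(x + c • y : lp (fun _ : ℕ => ℂ) 1) i‖) (‖x‖ + ‖y‖) := by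
      have h1 := (l1_hasSum_norm x).add (l1_hasSum_norm y)
      refine h1.congr_fun fun i => ?_
      have : (x + c • y : lp (fun _ : ℕ => ℂ) 1) i
          = (x : ∀ _ : ℕ, ℂ) i + c * (y : ∀ _ : ℕ, ℂ) i := by
        simp [lp.coeFn_add, lp.coeFn_smul]
        rfl
      rw [this]
      rcases mul_eq_zero.mp (hxy i) with h | h
      · rw [h]; simp [norm_mul, hcnorm]
      · rw [h]; simp
    exact (l1_hasSum_norm _).unique hsum
  -- transfer through the isometry
  have hTxc : ‖T x + c • T y‖ = ‖T x‖ + ‖T y‖ := by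
    have : T (x + c • y) = T x + c • T y := by rw [map_add, map_smul]
    rw [← this, hiso, hxc, ← hiso x, ← hiso y]
  -- strict inequality at coordinate j
  have hle : ∀ i : ℕ, ‖(T x + c • T y : lp (fun _ : ℕ => ℂ) 1) i‖
      ≤ ‖(T x : ∀ _ : ℕ, ℂ) i‖ + ‖(T y : ∀ _ : ℕ, ℂ) i‖ := by
    intro i
    have : (T x + c • T y : lp (fun _ : ℕ => ℂ) 1) i
        = (T x : ∀ _ : ℕ, ℂ) i + c * (T y : ∀ _ : ℕ, ℂ) i := by
      simp [lp.coeFn_add, lp.coeFn_smul]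
      rfl
    rw [this]
    calc ‖(T x : ∀ _ : ℕ, ℂ) i + c * (T y : ∀ _ : ℕ, ℂ) i‖
        ≤ ‖(T x : ∀ _ : ℕ, ℂ) i‖ + ‖c * (T y : ∀ _ : ℕ, ℂ) i‖ := norm_add_le _ _
      _ = ‖(T x : ∀ _ : ℕ, ℂ) i‖ + ‖(T y : ∀ _ : ℕ, ℂ) i‖ := by rw [norm_mul, hcnorm, one_mul]
  have hstrict : ‖(T x + c • T y : lp (fun _ : ℕ => ℂ) 1) j‖ < ‖a‖ + ‖b‖ := by
    have hco : (T x + c • T y : lp (fun _ : ℕ => ℂ) 1) j = a + c * b := by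
      simp [lp.coeFn_add, lp.coeFn_smul, ha, hb]
      rfl
    rw [hco]
    have key : (starRingEnd ℂ) b * b = ((‖b‖ : ℂ))^2 := by
      rw [mul_comm, Complex.mul_conj]
      norm_cast
      rw [Complex.normSq_eq_norm_sq]
    have hcb : c * b = -(a * ((‖b‖ : ℂ) / (‖a‖ : ℂ))) := by
      rw [hc, div_mul_eq_mul_div, neg_mul, mul_assoc, key, sq,
        div_eq_iff (mul_ne_zero hca hcbne)]
      field_simp
    rw [hcb]
    have : a + -(a * ((‖b‖ : ℂ) / (‖a‖ : ℂ))) = a * (1 - ((‖b‖ : ℂ) / (‖a‖ : ℂ))) := by ring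
    rw [this, norm_mul]
    have hnorm1 : ‖(1 : ℂ) - ((‖b‖ : ℂ) / (‖a‖ : ℂ))‖ = |1 - ‖b‖ / ‖a‖| := by
      rw [show (1 : ℂ) - ((‖b‖ : ℂ) / (‖a‖ : ℂ)) = ((1 - ‖b‖ / ‖a‖ : ℝ) : ℂ) by push_cast; ring]
      exact Complex.norm_real _
    rw [hnorm1]
    have h2 : ‖a‖ * |1 - ‖b‖ / ‖a‖| = |‖a‖ - ‖b‖| := by
      have hmul : ‖a‖ * (1 - ‖b‖ / ‖a‖) = ‖a‖ - ‖b‖ := by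
        rw [mul_sub, mul_one, mul_comm ‖a‖ (‖b‖ / ‖a‖), div_mul_cancel₀ _ hra.ne']
      rw [← hmul, abs_mul, abs_of_pos hra]
    rw [h2]
    exact abs_sub_lt_iff.mpr ⟨by linarith, by linarith⟩
  -- conclude via strict tsum inequality
  have hsummable : Summable (fun i => ‖(T x : ∀ _ : ℕ, ℂ) i‖ + ‖(T y : ∀ _ : ℕ, ℂ) i‖) :=
    (l1_hasSum_norm (T x)).summable.add (l1_hasSum_norm (T y)).summable
  have hlt : ∑' i, ‖(T x + c • T y : lp (fun _ : ℕ => ℂ) 1) i‖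
      < ∑' i, (‖(T x : ∀ _ : ℕ, ℂ) i‖ + ‖(T y : ∀ _ : ℕ, ℂ) i‖) :=
    Summable.tsum_lt_tsum_of_nonneg (fun i => norm_nonneg _) hle hstrict hsummable
  rw [← l1_norm_eq_tsum, Summable.tsum_add (l1_hasSum_norm (T x)).summable
    (l1_hasSum_norm (T y)).summable, ← l1_norm_eq_tsum, ← l1_norm_eq_tsum, hTxc] at hlt
  exact lt_irrefl _ hlt
end
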